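/- Let p = 4n-1 be prime with n > 3. Then ∑_{k=1}^{2n} r_p(k^2 - k + 2 - 3n) = ∑_{k=1}^{2n} r_p(k^2) + n. -/

import Mathlib

/-! Modulo `p` one has `k² - k + 2 - 3n ≡ (2n - k)² + 1`, so `k ↦ 2n - k` turns the left-hand side
into `∑_{0 ≤ j < 2n} r_p(j² + 1)`. As `p ≡ 3 (mod 4)`, `-1` is not a square mod `p`, so `p` divides
no `j² + 1` and `r_p(j² + 1) = r_p(j²) + 1`. What remains is the boundary terms `r_p(0²) = 0` and
`r_p((2n)²) = n`. -/

open Finset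

theorem Int.add_one_emod_of_not_dvd {a p : ℤ} (hp : 0 < p) (h : ¬ p ∣ a + 1) :
    (a + 1) % p = a % p + 1 := by
  have hlt : a % p + 1 < p := by
    refine lt_of_le_of_ne (Int.emod_lt_of_pos a hp) fun heq => h ⟨a / p + 1, ?_⟩
    linear_combination (Int.emod_add_mul_ediv a p).symm + heq
  rw [← Int.emod_add_emod, Int.emod_eq_of_lt (by have := Int.emod_nonneg a hp.ne'; omega) hlt]

theorem Int.not_dvd_sq_add_one_of_emod_four_eq_three {p : ℤ} (hp : Prime p) (hp0 : 0 < p)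
    (hp4 : p % 4 = 3) (j : ℤ) : ¬ p ∣ j ^ 2 + 1 := by
  lift p to ℕ using hp0.le
  have : Fact p.Prime := ⟨Nat.prime_iff_prime_int.mpr hp⟩
  intro hdvd
  have hsq : (j : ZMod p) ^ 2 = -1 := by
    rw [eq_neg_iff_add_eq_zero]
    exact_mod_cast (ZMod.intCast_zmod_eq_zero_iff_dvd _ p).mpr hdvd
  exact ZMod.mod_four_ne_three_of_sq_eq_neg_one hsq (by omega)

theorem Int.sum_Icc_comp_const_sub {M : Type*} [AddCommMonoid M] (f : ℤ → M) (c a b : ℤ) :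
    ∑ k ∈ Icc a b, f (c - k) = ∑ j ∈ Icc (c - b) (c - a), f j := by
  refine sum_nbij' (c - ·) (c - ·) ?_ ?_ ?_ ?_ fun _ _ => rfl <;>
    intro x hx <;> simp only [mem_Icc] at * <;> omega

theorem sum_residues_half (n p : ℤ) (hn : 3 < n) (hp : p = 4 * n - 1)
    (hprime : Prime p) :
    ∑ k ∈ Finset.Icc (1 : ℤ) (2 * n), (k ^ 2 - k + 2 - 3 * n) % p =
      (∑ k ∈ Finset.Icc (1 : ℤ) (2 * n), k ^ 2 % p) + n := by
  have hp0 : 0 < p := by omega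
  have hshift (k : ℤ) : (k ^ 2 - k + 2 - 3 * n) % p = ((2 * n - k) ^ 2 + 1) % p :=
    Int.modEq_iff_dvd.mpr ⟨n + 1 - k, by rw [hp]; ring⟩
  have htop : (2 * n) ^ 2 % p = n := by
    rw [show (2 * n) ^ 2 = n + p * n by rw [hp]; ring, Int.add_mul_emod_self_left]
    exact Int.emod_eq_of_lt (by omega) (by omega)
  calc ∑ k ∈ Icc 1 (2 * n), (k ^ 2 - k + 2 - 3 * n) % p
      = ∑ j ∈ Ico 0 (2 * n), (j ^ 2 + 1) % p := by
        rw [sum_congr rfl fun k _ => hshift k,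
          Int.sum_Icc_comp_const_sub (fun j => (j ^ 2 + 1) % p), sub_self, Icc_sub_one_right_eq_Ico]
    _ = ∑ j ∈ Ico 0 (2 * n), (j ^ 2 % p + 1) :=
        sum_congr rfl fun j _ => Int.add_one_emod_of_not_dvd hp0
          (Int.not_dvd_sq_add_one_of_emod_four_eq_three hprime hp0 (by omega) j)
    _ = (∑ j ∈ Ico 0 (2 * n), j ^ 2 % p) + (2 * n) ^ 2 % p + n := by
        rw [sum_add_distrib, sum_const, Int.card_Ico, sub_zero, nsmul_eq_mul, mul_one,
          Int.toNat_of_nonneg (by omega), htop]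
        ring
    _ = (∑ j ∈ Icc 0 (2 * n), j ^ 2 % p) + n := by
        rw [sum_Ico_add_eq_sum_Icc (by omega)]
    _ = (∑ k ∈ Icc 1 (2 * n), k ^ 2 % p) + n := by
        rw [← sum_Ioc_add_eq_sum_Icc (by omega), ← zero_add 1, Icc_add_one_left_eq_Ioc]
        simp only [ne_eq, OfNat.ofNat_ne_zero, not_false_eq_true, zero_pow, Int.zero_emod, add_zero]
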